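/- arXiv:2207.00926 — 3 statements merged into one kernel-verified Lean document; each statement's English description precedes it below -/
import Mathlib

section
/- Let t ∈ (0,1), μ₁, μ₂ ∈ ℝ, and set μ₁₋ = μ₁ + z_{t/2}, μ₁₊ = μ₁ − z_{t/2}, μ₂₋ = μ₂ + z_{t/2}, μ₂₊ = μ₂ − z_{t/2}. Then for every ρ ∈ (−1,1), the function Q has derivative at ρ equal to (2π√(1−ρ²))^{−1} · [ exp(−(μ₁₋² + μ₂₋² − 2ρμ₁₋μ₂₋)/(2(1−ρ²))) + exp(−(μ₁₊² + μ₂₊² − 2ρμ₁₊μ₂₊)/(2(1−ρ²))) − exp(−(μ₁₋² + μ₂₊² − 2ρμ₁₋μ₂₊)/(2(1−ρ²))) − exp(−(μ₁₊² + μ₂₋² − 2ρμ₁₊μ₂₋)/(2(1−ρ²))) ]. -/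
open MeasureTheory Real Set Filter Asymptotics

/-- Standard normal density. -/
noncomputable def stdPDF (x : ℝ) : ℝ := (Real.sqrt (2 * Real.pi))⁻¹ * Real.exp (-x ^ 2 / 2)

/-- Standard normal CDF. -/
noncomputable def stdCDF (x : ℝ) : ℝ := ∫ u in Set.Iio x, stdPDF u

/-- Bivariate normal density with means `μ₁ μ₂`, unit variances, correlation `ρ`. -/
noncomputable def bvnPDF (μ₁ μ₂ ρ x y : ℝ) : ℝ :=
  (2 * Real.pi * Real.sqrt (1 - ρ ^ 2))⁻¹ *
    Real.exp (-((x - μ₁) ^ 2 - 2 * ρ * (x - μ₁) * (y - μ₂) + (y - μ₂) ^ 2) / (2 * (1 - ρ ^ 2)))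

/-- `Q(ρ)`: probability both coordinates exceed `|z|` in absolute value. -/
noncomputable def quadProb (μ₁ μ₂ z ρ : ℝ) : ℝ :=
  ∫ p in {p : ℝ × ℝ | |z| < |p.1| ∧ |z| < |p.2|}, bvnPDF μ₁ μ₂ ρ p.1 p.2

/-- `Cov(ρ)`: covariance of the two-sided rejection indicators. -/
noncomputable def covInd (μ₁ μ₂ z ρ : ℝ) : ℝ :=
  quadProb μ₁ μ₂ z ρ -
    (stdCDF (z + μ₁) + stdCDF (z - μ₁)) * (stdCDF (z + μ₂) + stdCDF (z - μ₂))


/-!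
By dominated differentiation under the integral sign, `Q'(ρ)` is the integral over the region of
`∂f/∂ρ`: on `|ρ| ≤ r < 1` the density and its derivatives are bounded by one product Gaussian.
Plackett's identity `∂f/∂ρ = ∂²f/∂x∂y` turns this into an integral of a mixed second derivative
over `S × S` with `S = (-∞, -c) ∪ (c, ∞)`, `c = |z|`. Integrating first in `y`, then in `x`, by the
fundamental theorem of calculus (all terms vanish at infinity) leaves the alternating sum of `f`
over the four corners `(±c, ±c)`, which is the stated combination of exponentials.
-/

open Topology

noncomputable def bvnPartialX (μ₁ μ₂ ρ x y : ℝ) : ℝ :=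
  bvnPDF μ₁ μ₂ ρ x y * ((ρ * (y - μ₂) - (x - μ₁)) / (1 - ρ ^ 2))

noncomputable def bvnPartialRho (μ₁ μ₂ ρ x y : ℝ) : ℝ :=
  bvnPDF μ₁ μ₂ ρ x y *
    ((ρ * (1 - ρ ^ 2) + (x - μ₁) * (y - μ₂) * (1 - ρ ^ 2) -
      ρ * ((x - μ₁) ^ 2 - 2 * ρ * (x - μ₁) * (y - μ₂) + (y - μ₂) ^ 2)) / (1 - ρ ^ 2) ^ 2)

section Derivatives

variable (μ₁ μ₂ : ℝ) {ρ : ℝ}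

lemma hasDerivAt_bvnPDF_x (x y : ℝ) :
    HasDerivAt (fun x => bvnPDF μ₁ μ₂ ρ x y) (bvnPartialX μ₁ μ₂ ρ x y) x := by
  have hu := (hasDerivAt_id' x).sub_const μ₁
  have hq : HasDerivAt
      (fun x => -((x - μ₁) ^ 2 - 2 * ρ * (x - μ₁) * (y - μ₂) + (y - μ₂) ^ 2) / (2 * (1 - ρ ^ 2)))
      ((ρ * (y - μ₂) - (x - μ₁)) / (1 - ρ ^ 2)) x := by
    refine (((hu.fun_pow 2).fun_sub ((hu.const_mul (2 * ρ)).mul_const (y - μ₂))).add_const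
      ((y - μ₂) ^ 2)).fun_neg.div_const (2 * (1 - ρ ^ 2)) |>.congr_deriv ?_
    field_simp
    ring
  exact (hq.exp.const_mul _).congr_deriv (mul_assoc _ _ _).symm

lemma hasDerivAt_bvnPartialX_y (x y : ℝ) :
    HasDerivAt (fun y => bvnPartialX μ₁ μ₂ ρ x y) (bvnPartialRho μ₁ μ₂ ρ x y) y := by
  have hv := (hasDerivAt_id' y).sub_const μ₂
  have hq : HasDerivAt
      (fun y => -((x - μ₁) ^ 2 - 2 * ρ * (x - μ₁) * (y - μ₂) + (y - μ₂) ^ 2) / (2 * (1 - ρ ^ 2)))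
      ((ρ * (x - μ₁) - (y - μ₂)) / (1 - ρ ^ 2)) y := by
    refine (((hv.const_mul (2 * ρ * (x - μ₁))).const_sub ((x - μ₁) ^ 2)).fun_add
      (hv.fun_pow 2)).fun_neg.div_const (2 * (1 - ρ ^ 2)) |>.congr_deriv ?_
    field_simp
    ring
  have hR : HasDerivAt (fun y => (ρ * (y - μ₂) - (x - μ₁)) / (1 - ρ ^ 2)) (ρ / (1 - ρ ^ 2)) y := by
    simpa using ((hv.const_mul ρ).sub_const (x - μ₁)).div_const (1 - ρ ^ 2)
  refine ((hq.exp.const_mul _).mul hR).congr_deriv ?_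
  simp only [bvnPartialRho, bvnPDF]
  field_simp
  ring

-- Together with `hasDerivAt_bvnPartialX_y`, this is Plackett's identity `∂f/∂ρ = ∂²f/∂x∂y`.
lemma hasDerivAt_bvnPDF_rho (hρ : ρ ^ 2 < 1) (x y : ℝ) :
    HasDerivAt (fun r => bvnPDF μ₁ μ₂ r x y) (bvnPartialRho μ₁ μ₂ ρ x y) ρ := by
  have hs : 0 < 1 - ρ ^ 2 := by linarith
  have hw : 0 < √(1 - ρ ^ 2) := Real.sqrt_pos.2 hs
  have h1 : HasDerivAt (fun r : ℝ => 1 - r ^ 2) (-(2 * ρ)) ρ := by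
    simpa using (hasDerivAt_pow 2 ρ).const_sub 1
  have hc : HasDerivAt (fun r => (2 * π * √(1 - r ^ 2))⁻¹) (ρ / (2 * π * √(1 - ρ ^ 2) ^ 3)) ρ := by
    refine (((Real.hasDerivAt_sqrt hs.ne').comp ρ h1).const_mul (2 * π)).inv
      (by positivity) |>.congr_deriv ?_
    simp only [Function.comp_apply]
    field_simp
  have hq : HasDerivAt
      (fun r => -((x - μ₁) ^ 2 - 2 * r * (x - μ₁) * (y - μ₂) + (y - μ₂) ^ 2) / (2 * (1 - r ^ 2)))
      (((x - μ₁) * (y - μ₂) * (1 - ρ ^ 2) -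
        ρ * ((x - μ₁) ^ 2 - 2 * ρ * (x - μ₁) * (y - μ₂) + (y - μ₂) ^ 2)) / (1 - ρ ^ 2) ^ 2) ρ := by
    refine (((((hasDerivAt_id' ρ).const_mul 2).mul_const (x - μ₁)).mul_const (y - μ₂)).const_sub
      ((x - μ₁) ^ 2)).add_const ((y - μ₂) ^ 2) |>.fun_neg.fun_div (h1.const_mul 2) (by positivity)
      |>.congr_deriv ?_
    field_simp
  refine (hc.mul hq.exp).congr_deriv ?_
  simp only [bvnPartialRho, bvnPDF]
  set w := √(1 - ρ ^ 2)
  rw [show 1 - ρ ^ 2 = w ^ 2 from (Real.sq_sqrt hs.le).symm]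
  field_simp
  ring

end Derivatives

section Continuity

variable {α : Type*} [TopologicalSpace α] {f g : α → ℝ} (μ₁ μ₂ ρ : ℝ)

@[fun_prop]
lemma Continuous.bvnPDF (hf : Continuous f) (hg : Continuous g) :
    Continuous fun t => bvnPDF μ₁ μ₂ ρ (f t) (g t) := by
  unfold _root_.bvnPDF
  fun_prop

@[fun_prop]
lemma Continuous.bvnPartialX (hf : Continuous f) (hg : Continuous g) :
    Continuous fun t => bvnPartialX μ₁ μ₂ ρ (f t) (g t) := by
  unfold _root_.bvnPartialX
  fun_prop

@[fun_prop]
lemma Continuous.bvnPartialRho (hf : Continuous f) (hg : Continuous g) :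
    Continuous fun t => bvnPartialRho μ₁ μ₂ ρ (f t) (g t) := by
  unfold _root_.bvnPartialRho
  fun_prop

end Continuity

section GaussianDecay

variable {f : ℝ → ℝ} {C a m : ℝ}

lemma tendsto_exp_neg_mul_sub_sq_cocompact (ha : 0 < a) (m : ℝ) :
    Tendsto (fun x => exp (-a * (x - m) ^ 2)) (cocompact ℝ) (𝓝 0) := by
  simpa [Function.comp_def] using (tendsto_rpow_abs_mul_exp_neg_mul_sq_cocompact ha 0).comp
    (Homeomorph.subRight m).isClosedEmbedding.tendsto_cocompact

lemma integrable_of_abs_le_gaussian (ha : 0 < a) (hf : Continuous f)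
    (h : ∀ x, |f x| ≤ C * exp (-a * (x - m) ^ 2)) : Integrable f :=
  (((integrable_exp_neg_mul_sq ha).comp_sub_right m).const_mul C).mono' hf.aestronglyMeasurable
    (ae_of_all _ h)

lemma tendsto_cocompact_of_abs_le_gaussian (ha : 0 < a)
    (h : ∀ x, |f x| ≤ C * exp (-a * (x - m) ^ 2)) : Tendsto f (cocompact ℝ) (𝓝 0) := by
  refine squeeze_zero_norm h ?_
  simpa using (tendsto_exp_neg_mul_sub_sq_cocompact ha m).const_mul C

end GaussianDecay

lemma integral_Iio_union_Ioi_of_hasDerivAt {g g' : ℝ → ℝ} {a b : ℝ} (hab : a ≤ b)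
    (hderiv : ∀ x, HasDerivAt g (g' x) x) (hint : Integrable g')
    (hlim : Tendsto g (cocompact ℝ) (𝓝 0)) :
    ∫ x in Iio a ∪ Ioi b, g' x = g a - g b := by
  have hdisj : Disjoint (Iio a) (Ioi b) := (Iic_disjoint_Ioi hab).mono_left Iio_subset_Iic_self
  rw [setIntegral_union hdisj measurableSet_Ioi hint.integrableOn hint.integrableOn,
    setIntegral_congr_set Iio_ae_eq_Iic,
    integral_Iic_of_hasDerivAt_of_tendsto' (fun x _ => hderiv x) hint.integrableOn
      (hlim.mono_left atBot_le_cocompact),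
    integral_Ioi_of_hasDerivAt_of_tendsto' (fun x _ => hderiv x) hint.integrableOn
      (hlim.mono_left atTop_le_cocompact)]
  ring

lemma integrable_gaussProd {a : ℝ} (ha : 0 < a) (C μ₁ μ₂ : ℝ) :
    Integrable fun p : ℝ × ℝ => C * (exp (-a * (p.1 - μ₁) ^ 2) * exp (-a * (p.2 - μ₂) ^ 2)) := by
  have h := (((integrable_exp_neg_mul_sq ha).comp_sub_right μ₁).mul_prod
    ((integrable_exp_neg_mul_sq ha).comp_sub_right μ₂)).const_mul C
  rwa [← Measure.volume_eq_prod] at h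

def GaussDominated (F : ℝ → ℝ → ℝ) (C a μ₁ μ₂ : ℝ) : Prop :=
  ∀ x y, |F x y| ≤ C * (exp (-a * (x - μ₁) ^ 2) * exp (-a * (y - μ₂) ^ 2))

namespace GaussDominated

variable {F : ℝ → ℝ → ℝ} {C a μ₁ μ₂ : ℝ}

lemma swap (h : GaussDominated F C a μ₁ μ₂) : GaussDominated (fun y x => F x y) C a μ₂ μ₁ :=
  fun y x => (h x y).trans_eq (by ring)

lemma integrable (h : GaussDominated F C a μ₁ μ₂) (ha : 0 < a)
    (hF : Continuous fun p : ℝ × ℝ => F p.1 p.2) : Integrable fun p : ℝ × ℝ => F p.1 p.2 :=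
  (integrable_gaussProd ha C μ₁ μ₂).mono' hF.aestronglyMeasurable
    (ae_of_all _ fun p => h p.1 p.2)

lemma integrable_apply (h : GaussDominated F C a μ₁ μ₂) (ha : 0 < a) {x : ℝ}
    (hF : Continuous (F x)) : Integrable (F x) :=
  integrable_of_abs_le_gaussian ha hF fun y => (h x y).trans_eq (mul_assoc _ _ _).symm

lemma tendsto_apply (h : GaussDominated F C a μ₁ μ₂) (ha : 0 < a) (x : ℝ) :
    Tendsto (F x) (cocompact ℝ) (𝓝 0) :=
  tendsto_cocompact_of_abs_le_gaussian ha fun y => (h x y).trans_eq (mul_assoc _ _ _).symm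

end GaussDominated

section Bounds

variable {r ρ : ℝ}

lemma one_add_le_mul_exp {b T : ℝ} (hb : 0 < b) (hT : 0 ≤ T) :
    1 + T ≤ (1 + b⁻¹) * exp (b * T) := by
  have hexp := add_one_le_exp (b * T)
  have hbT : 0 ≤ b * T := by positivity
  calc 1 + T ≤ (1 + b⁻¹) * (b * T + 1) := by
        field_simp
        nlinarith
    _ ≤ (1 + b⁻¹) * exp (b * T) := by gcongr

lemma quadForm_lower_bound (hρ : |ρ| ≤ r) (u v : ℝ) :
    (1 - r) * (u ^ 2 + v ^ 2) ≤ u ^ 2 - 2 * ρ * u * v + v ^ 2 := by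
  obtain ⟨hρ₁, hρ₂⟩ := abs_le.1 hρ
  nlinarith [mul_nonneg (sub_nonneg.2 hρ₂) (sq_nonneg (u + v)),
    mul_nonneg (by linarith : (0 : ℝ) ≤ r + ρ) (sq_nonneg (u - v))]

-- Half of the Gaussian decay rate `(1 - r) / 2` absorbs the polynomial growth of `R`.
lemma abs_bvnPDF_mul_le (μ₁ μ₂ : ℝ) {K R : ℝ} (hr : r < 1) (hρ : |ρ| ≤ r) (x y : ℝ)
    (hR : |R| ≤ K * (1 + ((x - μ₁) ^ 2 + (y - μ₂) ^ 2))) :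
    |bvnPDF μ₁ μ₂ ρ x y * R| ≤ (2 * π * √(1 - r ^ 2))⁻¹ * K * (1 + ((1 - r) / 4)⁻¹) *
      (exp (-((1 - r) / 4) * (x - μ₁) ^ 2) * exp (-((1 - r) / 4) * (y - μ₂) ^ 2)) := by
  set u := x - μ₁
  set v := y - μ₂
  set T := u ^ 2 + v ^ 2
  have hT : 0 ≤ T := by positivity
  have hr₀ : 0 ≤ r := (abs_nonneg ρ).trans hρ
  have hρr : ρ ^ 2 ≤ r ^ 2 := by rw [← sq_abs]; gcongr
  have hs : 0 < 1 - r ^ 2 := by nlinarith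
  have hsρ : 0 < 1 - ρ ^ 2 := by linarith
  have hK : 0 ≤ K := nonneg_of_mul_nonneg_left ((abs_nonneg R).trans hR) (by positivity)
  have hpre : (2 * π * √(1 - ρ ^ 2))⁻¹ ≤ (2 * π * √(1 - r ^ 2))⁻¹ := by
    gcongr
  have hexp : exp (-(u ^ 2 - 2 * ρ * u * v + v ^ 2) / (2 * (1 - ρ ^ 2))) ≤
      exp (-((1 - r) / 2 * T)) := by
    rw [exp_le_exp, neg_div, neg_le_neg_iff, le_div_iff₀ (by positivity)]
    nlinarith [quadForm_lower_bound hρ u v, mul_nonneg (mul_nonneg (sub_nonneg.2 hr.le) hT)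
      (sq_nonneg ρ)]
  calc |bvnPDF μ₁ μ₂ ρ x y * R|
      = (2 * π * √(1 - ρ ^ 2))⁻¹ * exp (-(u ^ 2 - 2 * ρ * u * v + v ^ 2) / (2 * (1 - ρ ^ 2)))
          * |R| := by
        rw [bvnPDF, abs_mul, abs_of_pos (by positivity)]
    _ ≤ (2 * π * √(1 - r ^ 2))⁻¹ * exp (-((1 - r) / 2 * T)) * (K * (1 + T)) := by gcongr
    _ = (2 * π * √(1 - r ^ 2))⁻¹ * K * ((1 + T) * exp (-((1 - r) / 2 * T))) := by ring
    _ ≤ (2 * π * √(1 - r ^ 2))⁻¹ * K *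
          ((1 + ((1 - r) / 4)⁻¹) * exp ((1 - r) / 4 * T) * exp (-((1 - r) / 2 * T))) := by
        gcongr
        exact one_add_le_mul_exp (by linarith) hT
    _ = _ := by
        rw [mul_assoc (1 + _), ← exp_add, ← exp_add]
        simp only [T]
        ring_nf

lemma abs_bvnPartialX_factor_le (hr : r < 1) (hρ : |ρ| ≤ r) (u v : ℝ) :
    |(ρ * v - u) / (1 - ρ ^ 2)| ≤ 4 / (1 - r ^ 2) ^ 2 * (1 + (u ^ 2 + v ^ 2)) := by
  have hr₀ : 0 ≤ r := (abs_nonneg ρ).trans hρ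
  have hρr : ρ ^ 2 ≤ r ^ 2 := by rw [← sq_abs]; gcongr
  have hs : 0 < 1 - r ^ 2 := by nlinarith
  have hN : |ρ * v - u| ≤ 1 + (u ^ 2 + v ^ 2) := by
    have : |ρ| * |v| ≤ |v| := mul_le_of_le_one_left (abs_nonneg v) (hρ.trans hr.le)
    calc |ρ * v - u| ≤ |ρ| * |v| + |u| := by rw [← abs_mul]; exact abs_sub _ _
      _ ≤ 1 + (u ^ 2 + v ^ 2) := by
        nlinarith [sq_nonneg (|u| - 1), sq_nonneg (|v| - 1), sq_abs u, sq_abs v]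
  rw [abs_div, abs_of_pos (a := 1 - ρ ^ 2) (by linarith)]
  calc |ρ * v - u| / (1 - ρ ^ 2) ≤ (1 + (u ^ 2 + v ^ 2)) / (1 - r ^ 2) ^ 2 := by
        gcongr
        nlinarith
    _ ≤ 4 / (1 - r ^ 2) ^ 2 * (1 + (u ^ 2 + v ^ 2)) := by
      rw [div_mul_eq_mul_div]
      gcongr
      nlinarith [sq_nonneg u, sq_nonneg v]

lemma abs_bvnPartialRho_factor_le (hr : r < 1) (hρ : |ρ| ≤ r) (u v : ℝ) :
    |(ρ * (1 - ρ ^ 2) + u * v * (1 - ρ ^ 2) - ρ * (u ^ 2 - 2 * ρ * u * v + v ^ 2)) /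
        (1 - ρ ^ 2) ^ 2| ≤ 4 / (1 - r ^ 2) ^ 2 * (1 + (u ^ 2 + v ^ 2)) := by
  have hρ₁ : |ρ| ≤ 1 := hρ.trans hr.le
  obtain ⟨hρl, hρu⟩ := abs_le.1 hρ₁
  have hr₀ : 0 ≤ r := (abs_nonneg ρ).trans hρ
  have hρr : ρ ^ 2 ≤ r ^ 2 := by rw [← sq_abs]; gcongr
  have hs : 0 < 1 - r ^ 2 := by nlinarith
  have hsρ : 1 - ρ ^ 2 ≤ 1 := by nlinarith
  have hsρ₀ : 0 < 1 - ρ ^ 2 := by linarith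
  set T := u ^ 2 + v ^ 2
  set q := u ^ 2 - 2 * ρ * u * v + v ^ 2
  have hq₀ : 0 ≤ q := by simpa using quadForm_lower_bound hρ₁ u v
  have hq₂ : q ≤ 2 * T := by
    nlinarith [mul_nonneg (by linarith : (0 : ℝ) ≤ 1 + ρ) (sq_nonneg (u + v)),
      mul_nonneg (by linarith : (0 : ℝ) ≤ 1 - ρ) (sq_nonneg (u - v))]
  have huv : |u| * |v| ≤ T := by
    nlinarith [sq_nonneg (|u| - |v|), sq_abs u, sq_abs v]
  have hN : |ρ * (1 - ρ ^ 2) + u * v * (1 - ρ ^ 2) - ρ * q| ≤ 4 * (1 + T) := by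
    calc _ ≤ |ρ * (1 - ρ ^ 2)| + |u * v * (1 - ρ ^ 2)| + |ρ * q| :=
          (abs_sub _ _).trans (by gcongr; exact abs_add_le _ _)
      _ ≤ 1 * 1 + T * 1 + 1 * (2 * T) := by
          simp only [abs_mul, abs_of_pos (a := 1 - ρ ^ 2) (by linarith), abs_of_nonneg hq₀]
          gcongr
      _ ≤ 4 * (1 + T) := by linarith
  rw [abs_div, abs_of_pos (a := (1 - ρ ^ 2) ^ 2) (by positivity), div_mul_eq_mul_div]
  gcongr

end Bounds

lemma exists_gaussDominated_bvnPDF (μ₁ μ₂ : ℝ) {r : ℝ} (hr : r < 1) :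
    ∃ C a, 0 < a ∧ ∀ ρ, |ρ| ≤ r →
      GaussDominated (bvnPDF μ₁ μ₂ ρ) C a μ₁ μ₂ ∧
      GaussDominated (bvnPartialX μ₁ μ₂ ρ) C a μ₁ μ₂ ∧
      GaussDominated (bvnPartialRho μ₁ μ₂ ρ) C a μ₁ μ₂ := by
  refine ⟨(2 * π * √(1 - r ^ 2))⁻¹ * (4 / (1 - r ^ 2) ^ 2) * (1 + ((1 - r) / 4)⁻¹), (1 - r) / 4,
    by linarith, fun ρ hρ => ⟨fun x y => ?_, fun x y => ?_, fun x y => ?_⟩⟩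
  · have hr₀ : 0 ≤ r := (abs_nonneg ρ).trans hρ
    have hs : 0 < 1 - r ^ 2 := by nlinarith
    have hK : 1 ≤ 4 / (1 - r ^ 2) ^ 2 := by
      rw [le_div_iff₀ (by positivity)]
      nlinarith
    have h1 : |(1 : ℝ)| ≤ 4 / (1 - r ^ 2) ^ 2 * (1 + ((x - μ₁) ^ 2 + (y - μ₂) ^ 2)) := by
      rw [abs_one]
      nlinarith [sq_nonneg (x - μ₁), sq_nonneg (y - μ₂)]
    simpa using abs_bvnPDF_mul_le μ₁ μ₂ hr hρ x y h1
  · exact abs_bvnPDF_mul_le μ₁ μ₂ hr hρ x y (abs_bvnPartialX_factor_le hr hρ _ _)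
  · exact abs_bvnPDF_mul_le μ₁ μ₂ hr hρ x y (abs_bvnPartialRho_factor_le hr hρ _ _)

lemma integral_bvnPartialRho_prod (μ₁ μ₂ : ℝ) {ρ : ℝ} (hρ : |ρ| < 1) {a₁ b₁ a₂ b₂ : ℝ}
    (h₁ : a₁ ≤ b₁) (h₂ : a₂ ≤ b₂) :
    ∫ p in (Iio a₁ ∪ Ioi b₁) ×ˢ (Iio a₂ ∪ Ioi b₂), bvnPartialRho μ₁ μ₂ ρ p.1 p.2 =
      bvnPDF μ₁ μ₂ ρ a₁ a₂ - bvnPDF μ₁ μ₂ ρ a₁ b₂ - bvnPDF μ₁ μ₂ ρ b₁ a₂ +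
        bvnPDF μ₁ μ₂ ρ b₁ b₂ := by
  obtain ⟨C, a, ha, hdom⟩ := exists_gaussDominated_bvnPDF μ₁ μ₂ hρ
  obtain ⟨hf, hX, hRho⟩ := hdom ρ le_rfl
  have hinner (x : ℝ) : ∫ y in Iio a₂ ∪ Ioi b₂, bvnPartialRho μ₁ μ₂ ρ x y =
      bvnPartialX μ₁ μ₂ ρ x a₂ - bvnPartialX μ₁ μ₂ ρ x b₂ :=
    integral_Iio_union_Ioi_of_hasDerivAt h₂ (hasDerivAt_bvnPartialX_y μ₁ μ₂ x)
      (hRho.integrable_apply ha (by fun_prop)) (hX.tendsto_apply ha x)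
  have hint (y : ℝ) : Integrable fun x => bvnPartialX μ₁ μ₂ ρ x y :=
    hX.swap.integrable_apply ha (by fun_prop)
  have houter (y : ℝ) : ∫ x in Iio a₁ ∪ Ioi b₁, bvnPartialX μ₁ μ₂ ρ x y =
      bvnPDF μ₁ μ₂ ρ a₁ y - bvnPDF μ₁ μ₂ ρ b₁ y :=
    integral_Iio_union_Ioi_of_hasDerivAt h₁ (fun x => hasDerivAt_bvnPDF_x μ₁ μ₂ x y)
      (hint y) (hf.swap.tendsto_apply ha y)
  rw [Measure.volume_eq_prod, setIntegral_prod _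
    (by rw [← Measure.volume_eq_prod]
        exact (hRho.integrable ha (by fun_prop)).integrableOn)]
  simp only [hinner]
  rw [integral_sub (hint a₂).integrableOn (hint b₂).integrableOn, houter, houter]
  ring

lemma hasDerivAt_integral_bvnPDF (μ₁ μ₂ : ℝ) {ρ : ℝ} (hρ : |ρ| < 1) (s : Set (ℝ × ℝ)) :
    HasDerivAt (fun r => ∫ p in s, bvnPDF μ₁ μ₂ r p.1 p.2)
      (∫ p in s, bvnPartialRho μ₁ μ₂ ρ p.1 p.2) ρ := by
  set r := (1 + |ρ|) / 2 with hr_def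
  have hr : r < 1 := by linarith
  obtain ⟨C, a, ha, hdom⟩ := exists_gaussDominated_bvnPDF μ₁ μ₂ hr
  have hnhds : Icc (-r) r ∈ 𝓝 ρ :=
    Icc_mem_nhds (by linarith [neg_abs_le ρ]) (by linarith [le_abs_self ρ])
  have hρ₂ (ρ' : ℝ) (h : ρ' ∈ Icc (-r) r) : ρ' ^ 2 < 1 := by
    rw [← sq_abs]; nlinarith [abs_le.2 h, abs_nonneg ρ']
  have hf (ρ' : ℝ) : Continuous fun p : ℝ × ℝ => bvnPDF μ₁ μ₂ ρ' p.1 p.2 := by fun_prop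
  have hf' : Continuous fun p : ℝ × ℝ => bvnPartialRho μ₁ μ₂ ρ p.1 p.2 := by fun_prop
  exact (hasDerivAt_integral_of_dominated_loc_of_deriv_le hnhds
    (Eventually.of_forall fun ρ' => (hf ρ').aestronglyMeasurable.restrict)
    (((hdom ρ (by linarith [hr_def])).1.integrable ha (hf ρ)).integrableOn)
    hf'.aestronglyMeasurable.restrict
    (ae_of_all _ fun p ρ' hρ' => (hdom ρ' (abs_le.2 hρ')).2.2 p.1 p.2)
    (integrable_gaussProd ha C μ₁ μ₂).integrableOn
    (ae_of_all _ fun p ρ' hρ' => hasDerivAt_bvnPDF_rho μ₁ μ₂ (hρ₂ ρ' hρ') p.1 p.2)).2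

lemma setOf_lt_abs_eq (c : ℝ) : {x : ℝ | c < |x|} = Iio (-c) ∪ Ioi c := by
  ext x
  simp [lt_abs, lt_neg, or_comm]

theorem statement4_general (z μ₁ μ₂ ρ : ℝ) (hρ : ρ ∈ Set.Ioo (-1 : ℝ) 1) :
    HasDerivAt (fun r => quadProb μ₁ μ₂ z r)
      ((2 * Real.pi * Real.sqrt (1 - ρ ^ 2))⁻¹ *
        (Real.exp (-((μ₁ + z) ^ 2 + (μ₂ + z) ^ 2 - 2 * ρ * (μ₁ + z) * (μ₂ + z)) /
            (2 * (1 - ρ ^ 2)))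
          + Real.exp (-((μ₁ - z) ^ 2 + (μ₂ - z) ^ 2 - 2 * ρ * (μ₁ - z) * (μ₂ - z)) /
            (2 * (1 - ρ ^ 2)))
          - Real.exp (-((μ₁ + z) ^ 2 + (μ₂ - z) ^ 2 - 2 * ρ * (μ₁ + z) * (μ₂ - z)) /
            (2 * (1 - ρ ^ 2)))
          - Real.exp (-((μ₁ - z) ^ 2 + (μ₂ + z) ^ 2 - 2 * ρ * (μ₁ - z) * (μ₂ + z)) /
            (2 * (1 - ρ ^ 2))))) ρ := by
  have hρ' : |ρ| < 1 := abs_lt.2 hρ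
  have hregion : {p : ℝ × ℝ | |z| < |p.1| ∧ |z| < |p.2|} =
      (Iio (-|z|) ∪ Ioi |z|) ×ˢ (Iio (-|z|) ∪ Ioi |z|) := by
    rw [← setOf_lt_abs_eq]
    rfl
  have hz : -|z| ≤ |z| := neg_le_self (abs_nonneg z)
  refine (hasDerivAt_integral_bvnPDF μ₁ μ₂ hρ' _).congr_deriv ?_
  rw [hregion, integral_bvnPartialRho_prod μ₁ μ₂ hρ' hz hz]
  -- the corner sum is invariant under `c ↦ -c`, so `|z|` may be replaced by `z`
  rcases abs_cases z with ⟨h, -⟩ | ⟨h, -⟩ <;> simp only [h, bvnPDF, neg_neg] <;> ring_nf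

theorem statement4 (t z μ₁ μ₂ ρ : ℝ) (ht : t ∈ Set.Ioo (0 : ℝ) 1)
    (hz : stdCDF z = t / 2) (hρ : ρ ∈ Set.Ioo (-1 : ℝ) 1) :
    HasDerivAt (fun r => quadProb μ₁ μ₂ z r)
      ((2 * Real.pi * Real.sqrt (1 - ρ ^ 2))⁻¹ *
        (Real.exp (-((μ₁ + z) ^ 2 + (μ₂ + z) ^ 2 - 2 * ρ * (μ₁ + z) * (μ₂ + z)) /
            (2 * (1 - ρ ^ 2)))
          + Real.exp (-((μ₁ - z) ^ 2 + (μ₂ - z) ^ 2 - 2 * ρ * (μ₁ - z) * (μ₂ - z)) /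
            (2 * (1 - ρ ^ 2)))
          - Real.exp (-((μ₁ + z) ^ 2 + (μ₂ - z) ^ 2 - 2 * ρ * (μ₁ + z) * (μ₂ - z)) /
            (2 * (1 - ρ ^ 2)))
          - Real.exp (-((μ₁ - z) ^ 2 + (μ₂ + z) ^ 2 - 2 * ρ * (μ₁ - z) * (μ₂ + z)) /
            (2 * (1 - ρ ^ 2))))) ρ :=
  statement4_general z μ₁ μ₂ ρ hρ
end

section
/- Fix z, μ, x ∈ ℝ and define F : (−1,1) → ℝ by F(ρ) = Φ((z − μ − ρx)/√(1−ρ²)). Then the first three derivatives of F at ρ = 0 are F′(0) = −φ(z−μ)·x, F″(0) = −φ(z−μ)(z−μ)·(x² − 1), and F‴(0) = −φ(z−μ)[(z−μ)² − 1]·(x³ − 3x). -/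
open MeasureTheory Real Set Filter Asymptotics

open Topology

/-!
Write `F = Φ ∘ g` with `g ρ = (a - ρ x) h(ρ)`, `a = z - μ` and `h(ρ) = (1 - ρ²)^(-1/2)`.
Since `φ' t = -t φ t`, the chain rule gives `F' = φ(g) g'`, `F'' = φ(g) (g'' - g g'²)` and
`F''' = φ(g) (g''' - 3 g g' g'' - (1 - g²) g'³)`. As `h' = ρ h³`, all derivatives of `g` are
polynomials in `ρ` and `h`; at `ρ = 0`, where `h = 1`, they are `g = a`, `g' = -x`, `g'' = a`,
`g''' = -3x`, and the three formulas follow.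
-/

lemma integrable_stdPDF : Integrable stdPDF := by
  refine ((integrable_exp_neg_mul_sq (b := 1 / 2) (by norm_num)).const_mul
    (√(2 * π))⁻¹).congr (.of_forall fun t => ?_)
  simp only [stdPDF]
  ring_nf

lemma continuous_stdPDF : Continuous stdPDF := by
  unfold stdPDF
  fun_prop

lemma hasDerivAt_stdCDF (y : ℝ) : HasDerivAt stdCDF (stdPDF y) y := by
  have hsplit : ∀ b, stdCDF b = stdCDF 0 + ∫ u in (0 : ℝ)..b, stdPDF u := fun b => by
    have := intervalIntegral.integral_Iic_sub_Iic (a := 0) (b := b)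
      integrable_stdPDF.integrableOn integrable_stdPDF.integrableOn
    simp only [integral_Iic_eq_integral_Iio] at this
    rw [stdCDF, stdCDF, ← this]
    ring
  refine HasDerivAt.congr_of_eventuallyEq ?_ (.of_forall hsplit)
  exact (intervalIntegral.integral_hasDerivAt_right integrable_stdPDF.intervalIntegrable
    continuous_stdPDF.aestronglyMeasurable.stronglyMeasurableAtFilter
    continuous_stdPDF.continuousAt).const_add _

lemma hasDerivAt_stdPDF (t : ℝ) : HasDerivAt stdPDF (-t * stdPDF t) t := by
  have hexponent : HasDerivAt (fun s : ℝ => -s ^ 2 / 2) (-t) t :=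
    ((hasDerivAt_pow 2 t).neg.div_const 2).congr_deriv (by push_cast; ring)
  exact (hexponent.exp.const_mul _).congr_deriv (by rw [stdPDF]; ring)

lemma iteratedDeriv_eq_of_hasDerivAt {f f₁ f₂ : ℝ → ℝ} {s : Set ℝ} {x₀ f₃ : ℝ}
    (hs : IsOpen s) (hx₀ : x₀ ∈ s) (hf : ∀ x ∈ s, HasDerivAt f (f₁ x) x)
    (hf₁ : ∀ x ∈ s, HasDerivAt f₁ (f₂ x) x) (hf₂ : HasDerivAt f₂ f₃ x₀) :
    iteratedDeriv 1 f x₀ = f₁ x₀ ∧ iteratedDeriv 2 f x₀ = f₂ x₀ ∧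
      iteratedDeriv 3 f x₀ = f₃ := by
  have hderiv : ∀ x ∈ s, deriv f =ᶠ[𝓝 x] f₁ := fun x hx =>
    Filter.eventually_of_mem (hs.mem_nhds hx) fun y hy => (hf y hy).deriv
  have hderiv₂ : deriv (deriv f) =ᶠ[𝓝 x₀] f₂ :=
    Filter.eventually_of_mem (hs.mem_nhds hx₀) fun x hx =>
      (hderiv x hx).deriv_eq.trans (hf₁ x hx).deriv
  simp only [iteratedDeriv_eq_iterate, Function.iterate_succ, Function.iterate_zero,
    Function.comp_apply, Function.id_def]
  exact ⟨(hderiv x₀ hx₀).eq_of_nhds, hderiv₂.eq_of_nhds, hderiv₂.deriv_eq.trans hf₂.deriv⟩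

lemma iteratedDeriv_stdCDF_comp {g g₁ g₂ : ℝ → ℝ} {s : Set ℝ} {x₀ g₃ : ℝ}
    (hs : IsOpen s) (hx₀ : x₀ ∈ s) (hg : ∀ x ∈ s, HasDerivAt g (g₁ x) x)
    (hg₁ : ∀ x ∈ s, HasDerivAt g₁ (g₂ x) x) (hg₂ : HasDerivAt g₂ g₃ x₀) :
    iteratedDeriv 1 (fun x => stdCDF (g x)) x₀ = stdPDF (g x₀) * g₁ x₀ ∧
    iteratedDeriv 2 (fun x => stdCDF (g x)) x₀ =
      stdPDF (g x₀) * (g₂ x₀ - g x₀ * g₁ x₀ ^ 2) ∧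
    iteratedDeriv 3 (fun x => stdCDF (g x)) x₀ =
      stdPDF (g x₀) * (g₃ - 3 * g x₀ * g₁ x₀ * g₂ x₀ - (1 - g x₀ ^ 2) * g₁ x₀ ^ 3) := by
  have hpdf : ∀ x ∈ s, HasDerivAt (fun y => stdPDF (g y)) (-g x * stdPDF (g x) * g₁ x) x :=
    fun x hx => (hasDerivAt_stdPDF (g x)).comp x (hg x hx)
  refine iteratedDeriv_eq_of_hasDerivAt (f := fun x => stdCDF (g x))
    (f₂ := fun x => stdPDF (g x) * (g₂ x - g x * g₁ x ^ 2)) hs hx₀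
    (fun x hx => (hasDerivAt_stdCDF (g x)).comp x (hg x hx)) (fun x hx => ?_) ?_
  · exact ((hpdf x hx).mul (hg₁ x hx)).congr_deriv (by ring)
  · exact ((hpdf x₀ hx₀).mul (hg₂.sub ((hg x₀ hx₀).mul ((hg₁ x₀ hx₀).pow 2)))).congr_deriv
      (by simp only [Pi.sub_apply, Pi.mul_apply, Pi.pow_apply]; push_cast; ring)

noncomputable def invSqrtOneSubSq (ρ : ℝ) : ℝ := (√(1 - ρ ^ 2))⁻¹

lemma invSqrtOneSubSq_sq {ρ : ℝ} (hρ : 0 < 1 - ρ ^ 2) :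
    invSqrtOneSubSq ρ ^ 2 * (1 - ρ ^ 2) = 1 := by
  rw [invSqrtOneSubSq, inv_pow, sq_sqrt hρ.le, inv_mul_cancel₀ hρ.ne']

lemma hasDerivAt_invSqrtOneSubSq {ρ : ℝ} (hρ : 0 < 1 - ρ ^ 2) :
    HasDerivAt invSqrtOneSubSq (ρ * invSqrtOneSubSq ρ ^ 3) ρ := by
  refine (((hasDerivAt_pow 2 ρ).const_sub 1).sqrt hρ.ne').inv (sqrt_pos.mpr hρ).ne'
    |>.congr_deriv ?_
  rw [invSqrtOneSubSq]
  field_simp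
  norm_num

section
variable (a x : ℝ) {ρ : ℝ} (hρ : 0 < 1 - ρ ^ 2)
include hρ

lemma hasDerivAt_sub_mul_div_sqrt :
    HasDerivAt (fun ρ => (a - ρ * x) / √(1 - ρ ^ 2)) ((a * ρ - x) * invSqrtOneSubSq ρ ^ 3) ρ :=
  (((hasDerivAt_id ρ).mul_const x).const_sub a).mul (hasDerivAt_invSqrtOneSubSq hρ)
    |>.congr_deriv (by
      simp only [id]
      linear_combination x * invSqrtOneSubSq ρ * invSqrtOneSubSq_sq hρ)

lemma hasDerivAt_sub_mul_div_sqrt_deriv :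
    HasDerivAt (fun ρ => (a * ρ - x) * invSqrtOneSubSq ρ ^ 3)
      (a * invSqrtOneSubSq ρ ^ 3 + 3 * ρ * (a * ρ - x) * invSqrtOneSubSq ρ ^ 5) ρ :=
  (((hasDerivAt_id ρ).const_mul a).sub_const x).mul ((hasDerivAt_invSqrtOneSubSq hρ).pow 3)
    |>.congr_deriv (by simp only [id, Pi.pow_apply]; push_cast; ring)

lemma hasDerivAt_sub_mul_div_sqrt_deriv2 :
    HasDerivAt (fun ρ => a * invSqrtOneSubSq ρ ^ 3 + 3 * ρ * (a * ρ - x) * invSqrtOneSubSq ρ ^ 5)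
      (3 * (3 * a * ρ - x) * invSqrtOneSubSq ρ ^ 5 +
        15 * ρ ^ 2 * (a * ρ - x) * invSqrtOneSubSq ρ ^ 7) ρ :=
  ((((hasDerivAt_invSqrtOneSubSq hρ).pow 3).const_mul a).add
    ((((hasDerivAt_id ρ).const_mul 3).mul (((hasDerivAt_id ρ).const_mul a).sub_const x)).mul
      ((hasDerivAt_invSqrtOneSubSq hρ).pow 5)))
    |>.congr_deriv (by simp only [id, Pi.mul_apply, Pi.pow_apply]; push_cast; ring)

end

theorem statement7 (z μ x : ℝ) :
    let F : ℝ → ℝ := fun ρ => stdCDF ((z - μ - ρ * x) / Real.sqrt (1 - ρ ^ 2))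
    iteratedDeriv 1 F 0 = -stdPDF (z - μ) * x ∧
    iteratedDeriv 2 F 0 = -stdPDF (z - μ) * (z - μ) * (x ^ 2 - 1) ∧
    iteratedDeriv 3 F 0 = -stdPDF (z - μ) * ((z - μ) ^ 2 - 1) * (x ^ 3 - 3 * x) := by
  intro F
  have hs : IsOpen {ρ : ℝ | 0 < 1 - ρ ^ 2} := isOpen_lt continuous_const (by fun_prop)
  obtain ⟨h₁, h₂, h₃⟩ := iteratedDeriv_stdCDF_comp hs
    (show (0 : ℝ) ∈ {ρ : ℝ | 0 < 1 - ρ ^ 2} by norm_num)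
    (fun _ => hasDerivAt_sub_mul_div_sqrt (z - μ) x)
    (fun _ => hasDerivAt_sub_mul_div_sqrt_deriv (z - μ) x)
    (hasDerivAt_sub_mul_div_sqrt_deriv2 (z - μ) x (by norm_num : (0 : ℝ) < 1 - 0 ^ 2))
  have hg₀ : (z - μ - 0 * x) / √(1 - 0 ^ 2) = z - μ := by simp
  have h₀ : invSqrtOneSubSq 0 = 1 := by simp [invSqrtOneSubSq]
  refine ⟨h₁.trans ?_, h₂.trans ?_, h₃.trans ?_⟩ <;> simp only [hg₀, h₀] <;> ring
end

section
/- Let z > 0 and define H(μ) = φ(z+μ)(z+μ) + φ(z−μ)(z−μ) for μ ∈ ℝ. Then there exists a unique μ_* ∈ (z, z+1) such that H(μ_*) = 0; moreover, for every μ ∈ ℝ, H(μ) > 0 if and only if μ ∈ (−μ_*, μ_*). -/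
open MeasureTheory Real Set Filter Asymptotics

/-!
Since `φ(z + μ) = φ(z - μ) e^{-2zμ}`, the function `H` is `φ(z - μ)` times
`K(μ) = (z + μ) e^{-2zμ} + (z - μ)` (`reducedH z μ`), so only the sign of `K` matters. Moreover
`K(-μ) = e^{2zμ} K(μ)`, so that sign is even in `μ`. On `[0, ∞)`, `K` is strictly decreasing
(its derivative is `e^{-2zμ}(1 - 2z(z + μ)) - 1 < 0`), positive at `z` and negative at `z + 1`;
its unique zero `μ_*` lies in `(z, z + 1)` and `K(|μ|) > 0` exactly when `|μ| < μ_*`.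
-/

lemma stdPDF_pos (x : ℝ) : 0 < stdPDF x := by
  unfold stdPDF
  positivity

lemma stdPDF_add_eq_stdPDF_sub_mul (z μ : ℝ) :
    stdPDF (z + μ) = stdPDF (z - μ) * exp (-(2 * z * μ)) := by
  unfold stdPDF
  rw [mul_assoc, ← exp_add]
  congr 2
  ring

noncomputable def reducedH (z μ : ℝ) : ℝ := (z + μ) * exp (-(2 * z * μ)) + (z - μ)

lemma stdPDF_mul_add_stdPDF_mul_eq (z μ : ℝ) :
    stdPDF (z + μ) * (z + μ) + stdPDF (z - μ) * (z - μ) = stdPDF (z - μ) * reducedH z μ := by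
  rw [stdPDF_add_eq_stdPDF_sub_mul, reducedH]
  ring

lemma continuous_reducedH (z : ℝ) : Continuous (reducedH z) := by
  unfold reducedH
  fun_prop

lemma hasDerivAt_reducedH (z μ : ℝ) :
    HasDerivAt (reducedH z) (exp (-(2 * z * μ)) * (1 - 2 * z * (z + μ)) - 1) μ := by
  have hexp : HasDerivAt (fun x => exp (-(2 * z * x))) (exp (-(2 * z * μ)) * -(2 * z)) μ := by
    simpa using ((hasDerivAt_id μ).const_mul (2 * z)).neg.exp
  have hlin : HasDerivAt (fun x => z + x) 1 μ := (hasDerivAt_id μ).const_add z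
  exact ((hlin.mul hexp).add ((hasDerivAt_id μ).const_sub z)).congr_deriv (by ring)

lemma reducedH_strictAntiOn {z : ℝ} (hz : 0 < z) : StrictAntiOn (reducedH z) (Ici 0) := by
  refine strictAntiOn_of_deriv_neg (convex_Ici 0) (continuous_reducedH z).continuousOn ?_
  intro μ hμ
  rw [interior_Ici, mem_Ioi] at hμ
  rw [(hasDerivAt_reducedH z μ).deriv]
  have hexp_le : exp (-(2 * z * μ)) ≤ 1 := exp_le_one_iff.mpr (by nlinarith)
  have hexp_pos : 0 < exp (-(2 * z * μ)) := exp_pos _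
  nlinarith [mul_pos hexp_pos (by positivity : 0 < 2 * z * (z + μ))]

lemma reducedH_neg (z μ : ℝ) : reducedH z (-μ) = exp (2 * z * μ) * reducedH z μ := by
  have h : exp (2 * z * μ) * exp (-(2 * z * μ)) = 1 := by rw [← exp_add]; simp
  unfold reducedH
  simp only [mul_neg, neg_neg]
  linear_combination (-(z + μ)) * h

lemma reducedH_pos_iff_abs (z μ : ℝ) : 0 < reducedH z μ ↔ 0 < reducedH z |μ| := by
  rcases le_or_gt 0 μ with hμ | hμ
  · rw [abs_of_nonneg hμ]
  · rw [abs_of_neg hμ, reducedH_neg, mul_pos_iff_of_pos_left (exp_pos _)]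

lemma reducedH_self_pos {z : ℝ} (hz : 0 < z) : 0 < reducedH z z := by
  rw [reducedH, sub_self, add_zero]
  positivity

lemma reducedH_add_one_neg {z : ℝ} (hz : 0 < z) : reducedH z (z + 1) < 0 := by
  have hpos : 0 < 2 * z * (z + 1) := by positivity
  have hexp : 2 * z * (z + 1) + 1 < exp (2 * z * (z + 1)) := add_one_lt_exp hpos.ne'
  have hmul : (z + (z + 1)) * exp (-(2 * z * (z + 1))) < 1 := by
    rw [exp_neg, mul_inv_lt_iff₀ (exp_pos _), one_mul]
    nlinarith
  rw [reducedH]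
  linarith

lemma exists_reducedH_eq_zero {z : ℝ} (hz : 0 < z) :
    ∃ μs ∈ Ioo z (z + 1), reducedH z μs = 0 :=
  intermediate_value_Ioo' (by linarith) (continuous_reducedH z).continuousOn
    ⟨reducedH_add_one_neg hz, reducedH_self_pos hz⟩

theorem statement13 (z : ℝ) (hz : 0 < z) :
    ∃ μs : ℝ, μs ∈ Set.Ioo z (z + 1) ∧
      stdPDF (z + μs) * (z + μs) + stdPDF (z - μs) * (z - μs) = 0 ∧
      (∀ μ' ∈ Set.Ioo z (z + 1),
        stdPDF (z + μ') * (z + μ') + stdPDF (z - μ') * (z - μ') = 0 → μ' = μs) ∧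
      ∀ μ : ℝ, 0 < stdPDF (z + μ) * (z + μ) + stdPDF (z - μ) * (z - μ) ↔
        μ ∈ Set.Ioo (-μs) μs := by
  obtain ⟨μs, hμs, hroot⟩ := exists_reducedH_eq_zero hz
  have hanti := reducedH_strictAntiOn hz
  have hμs_nonneg : μs ∈ Ici 0 := mem_Ici.mpr (hz.trans hμs.1).le
  simp only [stdPDF_mul_add_stdPDF_mul_eq, mul_eq_zero, (stdPDF_pos _).ne', false_or,
    mul_pos_iff_of_pos_left (stdPDF_pos _)]
  refine ⟨μs, hμs, hroot, fun μ hμ hμroot => ?_, fun μ => ?_⟩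
  · exact hanti.injOn (mem_Ici.mpr (hz.trans hμ.1).le) hμs_nonneg (hμroot.trans hroot.symm)
  · rw [reducedH_pos_iff_abs, ← hroot, hanti.lt_iff_gt hμs_nonneg (abs_nonneg μ), abs_lt,
      mem_Ioo]
end
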